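/- arXiv:1408.3887 — 8 statements merged into one kernel-verified Lean document; each statement's English description precedes it below -/
import Mathlib

section
/- In a value quantale V, if ε ≻ 0 (ε is well-above 0), then there exists δ ≻ 0 such that δ + δ ≤ ε. More generally, for every n ≥ 1 there exists δ ≻ 0 with n·δ ≤ ε. -/
open Filter Set

/-- `a` is well-above `b`: for every `S` with `sInf S ≤ b` some `s ∈ S` satisfies `s ≤ a`. -/
def WellAbove {V : Type*} [CompleteLattice V] (a b : V) : Prop :=
  ∀ S : Set V, sInf S ≤ b → ∃ s ∈ S, s ≤ a

/-- Flagg's value quantales (bottom element plays the role of `0`). -/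
class ValueQuantale (V : Type*) extends CompleteLattice V, Add V where
  add_comm' : ∀ a b : V, a + b = b + a
  add_assoc' : ∀ a b c : V, a + b + c = a + (b + c)
  add_bot' : ∀ a : V, a + ⊥ = a
  sInf_wellAbove : ∀ x : V, x = sInf {y | WellAbove y x}
  add_sInf' : ∀ (x : V) (S : Set V), x + sInf S = sInf ((x + ·) '' S)
  inf_wellAbove_bot : ∀ a b : V, WellAbove a ⊥ → WellAbove b ⊥ → WellAbove (a ⊓ b) ⊥

variable {V : Type*} [ValueQuantale V] {X : Type*}

/-- n-fold sum `n·δ`. -/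
def nmul : ℕ → V → V
  | 0, _ => ⊥
  | n + 1, δ => δ + nmul n δ

/-- The ball `B_ε(x)`. -/
def ball' (d : X → X → V) (ε : V) (x : X) : Set X := {y | d x y ≤ ε}

/-- The op-ball `B^ε(x)`. -/
def opBall (d : X → X → V) (ε : V) (x : X) : Set X := {y | d y x ≤ ε}

/-- `B_ε(S)`. -/
def ballSet (d : X → X → V) (ε : V) (S : Set X) : Set X := ⋃ s ∈ S, ball' d ε s

/-- Cauchy filter on a `V`-space. -/
def IsCauchyF (d : X → X → V) (F : Filter X) : Prop :=
  ∀ ε : V, WellAbove ε ⊥ → ∃ x : X, ball' d ε x ∈ F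

/-- op-Cauchy filter on a `V`-space. -/
def IsOpCauchyF (d : X → X → V) (F : Filter X) : Prop :=
  ∀ ε : V, WellAbove ε ⊥ → ∃ x : X, opBall d ε x ∈ F

/-- Round filter. -/
def IsRound (d : X → X → V) (F : Filter X) : Prop :=
  ∀ F₀ ∈ F, ∃ ε : V, WellAbove ε ⊥ ∧ ∀ x : X, ball' d ε x ∈ F → ball' d ε x ⊆ F₀

/-- Minimal Cauchy filter: Cauchy with no proper Cauchy subfilter.
(A subfilter `G ⊆ F` in the set-of-sets sense corresponds to `G.sets ⊆ F.sets`.) -/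
def IsMinCauchy (d : X → X → V) (F : Filter X) : Prop :=
  IsCauchyF d F ∧ ∀ G : Filter X, IsCauchyF d G → G.sets ⊆ F.sets → G = F

/-- `F_≻`: the filter generated by the sets `B_ε(F₀)`, `F₀ ∈ F`, `ε ≻ 0`. -/
def roundify (d : X → X → V) (F : Filter X) : Filter X :=
  Filter.generate {S | ∃ F₀ ∈ F, ∃ ε : V, WellAbove ε ⊥ ∧ S = ballSet d ε F₀}

/-- Uniformly vanishing asymmetry. -/
def UVA (d : X → X → V) : Prop :=
  ∀ ε : V, WellAbove ε ⊥ → ∃ δ : V, WellAbove δ ⊥ ∧ ∀ x y : X, d y x ≤ δ → d x y ≤ ε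

/-- Distance between subsets: `d(S,T) = ⋀_{s∈S,t∈T} d(s,t)`. -/
def distSet (d : X → X → V) (S T : Set X) : V := ⨅ s ∈ S, ⨅ t ∈ T, d s t

/-- Distance between filters: `d(F,G) = ⋁_{F₀∈F,G₀∈G} d(F₀,G₀)`. -/
def distF (d : X → X → V) (F G : Filter X) : V :=
  ⨆ F₀ ∈ F, ⨆ G₀ ∈ G, distSet d F₀ G₀

/-- `F_x`, the filter generated by the balls `B_ε(x)`, `ε ≻ 0`. -/
def ptFilter (d : X → X → V) (x : X) : Filter X :=
  Filter.generate {S | ∃ ε : V, WellAbove ε ⊥ ∧ S = ball' d ε x}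

/-- `F^x`, the filter generated by the op-balls `B^ε(x)`, `ε ≻ 0`. -/
def opPtFilter (d : X → X → V) (x : X) : Filter X :=
  Filter.generate {S | ∃ ε : V, WellAbove ε ⊥ ∧ S = opBall d ε x}

lemma vq_add_mono_right {a b c : V} (h : b ≤ c) : a + b ≤ a + c := by
  have h2 : a + sInf {b, c} = sInf ((a + ·) '' {b, c}) := ValueQuantale.add_sInf' a {b, c}
  have hb : sInf {b, c} = b := by rw [sInf_pair, inf_eq_left.mpr h]
  rw [hb] at h2
  rw [h2]
  exact sInf_le ⟨c, by simp, rfl⟩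

lemma vq_add_mono {a b c d : V} (h1 : a ≤ b) (h2 : c ≤ d) : a + c ≤ b + d := by
  calc a + c ≤ a + d := vq_add_mono_right h2
    _ = d + a := ValueQuantale.add_comm' a d
    _ ≤ d + b := vq_add_mono_right h1
    _ = b + d := ValueQuantale.add_comm' d b

lemma vq_nmul_mono {a b : V} (h : a ≤ b) : ∀ n, nmul n a ≤ nmul n b := by
  intro n
  induction n with
  | zero => exact le_refl _
  | succ k ih => exact vq_add_mono h ih

/-- Halving lemma. -/
lemma vq_half (e : V) (he : WellAbove e ⊥) :
    ∃ δ : V, WellAbove δ ⊥ ∧ δ + δ ≤ e := by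
  set S : Set V := {y | WellAbove y ⊥} with hSdef
  have hS : sInf S = ⊥ := (ValueQuantale.sInf_wellAbove (⊥ : V)).symm
  set T : Set V := {z | ∃ a ∈ S, ∃ b ∈ S, z = a + b} with hTdef
  have hT : sInf T ≤ ⊥ := by
    have h1 : (⊥ : V) = sInf ((sInf S + ·) '' S) := by
      rw [← ValueQuantale.add_sInf', hS, ValueQuantale.add_bot']
    rw [h1]
    apply le_sInf
    rintro y ⟨b, hb, rfl⟩
    have h2 : sInf S + b = sInf ((b + ·) '' S) := by
      rw [ValueQuantale.add_comm', ValueQuantale.add_sInf']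
    show sInf T ≤ sInf S + b
    rw [h2]
    apply sInf_le_sInf
    rintro z ⟨a, ha, rfl⟩
    exact ⟨a, ha, b, hb, by rw [ValueQuantale.add_comm']⟩
  obtain ⟨t, ht, hte⟩ := he T hT
  obtain ⟨a, ha, b, hb, rfl⟩ := ht
  refine ⟨a ⊓ b, ValueQuantale.inf_wellAbove_bot a b ha hb, ?_⟩
  exact le_trans (vq_add_mono inf_le_left inf_le_right) hte

lemma vq_nmul (n : ℕ) : ∀ e : V, WellAbove e ⊥ →
    ∃ δ : V, WellAbove δ ⊥ ∧ nmul n δ ≤ e := by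
  induction n with
  | zero => exact fun e he => ⟨e, he, bot_le⟩
  | succ k ih =>
    intro e he
    obtain ⟨d, hd, hdd⟩ := vq_half e he
    obtain ⟨δ, hδ, hδd⟩ := ih d hd
    refine ⟨d ⊓ δ, ValueQuantale.inf_wellAbove_bot d δ hd hδ, ?_⟩
    calc nmul (k+1) (d ⊓ δ) = (d ⊓ δ) + nmul k (d ⊓ δ) := rfl
      _ ≤ d + nmul k δ := vq_add_mono inf_le_left (vq_nmul_mono inf_le_right k)
      _ ≤ d + d := vq_add_mono_right hδd
      _ ≤ e := hdd

/-- In a value quantale, for every `ε ≻ 0` there is `δ ≻ 0` with `δ + δ ≤ ε`;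
more generally for every `n ≥ 1` there is `δ ≻ 0` with `n·δ ≤ ε`. -/
theorem stmt0 (ε : V) (hε : WellAbove ε ⊥) :
    (∃ δ : V, WellAbove δ ⊥ ∧ δ + δ ≤ ε) ∧
    ∀ n : ℕ, 1 ≤ n → ∃ δ : V, WellAbove δ ⊥ ∧ nmul n δ ≤ ε := by
  exact ⟨vq_half ε hε, fun n _ => vq_nmul n ε hε⟩
end

section
/- Let X be a V-space. If a filter F on X is Cauchy and round, then F is a minimal Cauchy filter (i.e., F contains no proper Cauchy subfilter). -/
open Filter Set

variable {V : Type*} [ValueQuantale V] {X : Type*}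

/-- A Cauchy round filter is minimal Cauchy. -/
theorem stmt5 (d : X → X → V) (hrefl : ∀ x, d x x = ⊥)
    (htri : ∀ x y z, d x z ≤ d x y + d y z)
    (F : Filter X) (hC : IsCauchyF d F) (hR : IsRound d F) :
    IsMinCauchy d F := by
  refine ⟨hC, fun G hGC hGF => ?_⟩
  apply Filter.ext
  intro S
  constructor
  · exact fun h => hGF h
  · intro hSF
    obtain ⟨ε, hε, hball⟩ := hR S hSF
    obtain ⟨x, hx⟩ := hGC ε hε
    exact G.sets_of_superset hx (hball x (hGF hx))
end

section
/- Let X be a V-space and F a Cauchy filter on X. Then the filter F_≻ generated by the sets B_ε(F₀) for F₀ ∈ F and ε ≻ 0 is again Cauchy. -/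
open Filter Set

variable {V : Type*} [ValueQuantale V] {X : Type*}

private lemma add_le_add_right'' {V : Type*} [ValueQuantale V] {a b : V} (c : V) (h : a ≤ b) :
    c + a ≤ c + b := by
  have h1 : c + sInf {a, b} = sInf ((c + ·) '' {a, b}) := ValueQuantale.add_sInf' c {a, b}
  have h2 : sInf ({a, b} : Set V) = a := by
    rw [sInf_pair]; exact inf_eq_left.mpr h
  rw [h2] at h1
  rw [h1]
  exact sInf_le ⟨b, by simp, rfl⟩

private lemma exists_half' {V : Type*} [ValueQuantale V] {ε : V} (hε : WellAbove ε ⊥) :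
    ∃ δ : V, WellAbove δ ⊥ ∧ δ + δ ≤ ε := by
  set S₀ : Set V := {y | WellAbove y ⊥} with hS₀def
  have hS₀ : sInf S₀ = ⊥ := (ValueQuantale.sInf_wellAbove ⊥).symm
  set T : Set V := {z | ∃ a ∈ S₀, ∃ b ∈ S₀, z = a + b} with hTdef
  have hT : sInf T ≤ ⊥ := by
    rw [← hS₀]
    apply le_sInf
    intro a ha
    have h3 : sInf T ≤ a + sInf S₀ := by
      rw [ValueQuantale.add_sInf' a S₀]
      apply le_sInf
      rintro _ ⟨b, hb, rfl⟩
      exact sInf_le ⟨a, ha, b, hb, rfl⟩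
    rwa [hS₀, ValueQuantale.add_bot'] at h3
  obtain ⟨s, hs, hsε⟩ := hε T hT
  obtain ⟨a, ha, b, hb, rfl⟩ := hs
  refine ⟨a ⊓ b, ValueQuantale.inf_wellAbove_bot a b ha hb, ?_⟩
  calc a ⊓ b + (a ⊓ b) ≤ a ⊓ b + b := add_le_add_right'' _ inf_le_right
    _ = b + (a ⊓ b) := ValueQuantale.add_comm' _ _
    _ ≤ b + a := add_le_add_right'' _ inf_le_left
    _ = a + b := ValueQuantale.add_comm' _ _
    _ ≤ ε := hsε

/-- If `F` is Cauchy then `F_≻` is Cauchy. -/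
theorem stmt6 (d : X → X → V) (hrefl : ∀ x, d x x = ⊥)
    (htri : ∀ x y z, d x z ≤ d x y + d y z)
    (F : Filter X) (hC : IsCauchyF d F) :
    IsCauchyF d (roundify d F) := by
  intro ε hε
  obtain ⟨δ, hδ, hδε⟩ := exists_half' hε
  obtain ⟨x, hx⟩ := hC δ hδ
  refine ⟨x, ?_⟩
  have hgen : ballSet d δ (ball' d δ x) ∈ roundify d F :=
    Filter.mem_generate_of_mem ⟨ball' d δ x, hx, δ, hδ, rfl⟩
  refine Filter.mem_of_superset hgen ?_
  rintro y hy
  simp only [ballSet, Set.mem_iUnion] at hy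
  obtain ⟨s, hs, hsy⟩ := hy
  have : d x y ≤ δ + δ := le_trans (htri x s y)
    (le_trans (add_le_add_right'' _ hsy)
      (by rw [ValueQuantale.add_comm' (d x s) δ, ValueQuantale.add_comm' δ δ]
          exact add_le_add_right'' _ hs))
  exact le_trans this hδε
end

section
/- Let X be a V-space with uniformly vanishing asymmetry. A filter F on X is Cauchy if and only if it is op-Cauchy. Consequently, X is Cauchy complete if and only if X is op-Cauchy complete. -/
open Filter Set

variable {V : Type*} [ValueQuantale V] {X : Type*}

/-! Uniformly vanishing asymmetry means that small balls lie in op-balls of any prescribed radius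
around the same centre and vice versa, so "some small ball is in `F`" and "all balls around `x` are
in `F`" mean the same thing for balls and for op-balls. -/

def BallsRefine (B₁ B₂ : V → X → Set X) : Prop :=
  ∀ ε : V, WellAbove ε ⊥ → ∃ δ : V, WellAbove δ ⊥ ∧ ∀ x : X, B₁ δ x ⊆ B₂ ε x

namespace BallsRefine

variable {B₁ B₂ : V → X → Set X} {F : Filter X}

theorem exists_mem (h : BallsRefine B₁ B₂) (hF : ∀ ε : V, WellAbove ε ⊥ → ∃ x : X, B₁ ε x ∈ F) :
    ∀ ε : V, WellAbove ε ⊥ → ∃ x : X, B₂ ε x ∈ F := fun ε hε ↦ by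
  obtain ⟨δ, hδ, hsub⟩ := h ε hε
  obtain ⟨x, hx⟩ := hF δ hδ
  exact ⟨x, mem_of_superset hx (hsub x)⟩

theorem forall_mem {x : X} (h : BallsRefine B₁ B₂) (hx : ∀ ε : V, WellAbove ε ⊥ → B₁ ε x ∈ F) :
    ∀ ε : V, WellAbove ε ⊥ → B₂ ε x ∈ F := fun ε hε ↦ by
  obtain ⟨δ, hδ, hsub⟩ := h ε hε
  exact mem_of_superset (hx δ hδ) (hsub x)

end BallsRefine

namespace UVA

variable {d : X → X → V}

theorem ballsRefine_ball_opBall (h : UVA d) : BallsRefine (ball' d) (opBall d) := fun ε hε ↦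
  let ⟨δ, hδ, hsymm⟩ := h ε hε
  ⟨δ, hδ, fun x y hy ↦ hsymm y x hy⟩

theorem ballsRefine_opBall_ball (h : UVA d) : BallsRefine (opBall d) (ball' d) := fun ε hε ↦
  let ⟨δ, hδ, hsymm⟩ := h ε hε
  ⟨δ, hδ, fun x y hy ↦ hsymm x y hy⟩

theorem isCauchyF_iff_isOpCauchyF (h : UVA d) (F : Filter X) : IsCauchyF d F ↔ IsOpCauchyF d F :=
  ⟨h.ballsRefine_ball_opBall.exists_mem, h.ballsRefine_opBall_ball.exists_mem⟩

end UVA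

theorem stmt10_general (d : X → X → V) (hUVA : UVA d) :
    (∀ F : Filter X, IsCauchyF d F ↔ IsOpCauchyF d F) ∧
    ((∀ F : Filter X, F ≠ ⊥ → IsCauchyF d F → ∃ x : X, ∀ ε : V, WellAbove ε ⊥ → ball' d ε x ∈ F)
      ↔
     (∀ F : Filter X, F ≠ ⊥ → IsOpCauchyF d F → ∃ x : X, ∀ ε : V, WellAbove ε ⊥ → opBall d ε x ∈ F)) := by
  refine ⟨hUVA.isCauchyF_iff_isOpCauchyF, fun hcomplete F hF hop ↦ ?_, fun hcomplete F hF hc ↦ ?_⟩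
  · obtain ⟨x, hx⟩ := hcomplete F hF ((hUVA.isCauchyF_iff_isOpCauchyF F).2 hop)
    exact ⟨x, hUVA.ballsRefine_ball_opBall.forall_mem hx⟩
  · obtain ⟨x, hx⟩ := hcomplete F hF ((hUVA.isCauchyF_iff_isOpCauchyF F).1 hc)
    exact ⟨x, hUVA.ballsRefine_opBall_ball.forall_mem hx⟩

/-- Under uniformly vanishing asymmetry, a filter is Cauchy iff op-Cauchy;
consequently `X` is Cauchy complete iff it is op-Cauchy complete. -/
theorem stmt10 (d : X → X → V) (hrefl : ∀ x, d x x = ⊥)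
    (htri : ∀ x y z, d x z ≤ d x y + d y z) (hUVA : UVA d) :
    (∀ F : Filter X, IsCauchyF d F ↔ IsOpCauchyF d F) ∧
    ((∀ F : Filter X, F ≠ ⊥ → IsCauchyF d F → ∃ x : X, ∀ ε : V, WellAbove ε ⊥ → ball' d ε x ∈ F)
      ↔
     (∀ F : Filter X, F ≠ ⊥ → IsOpCauchyF d F → ∃ x : X, ∀ ε : V, WellAbove ε ⊥ → opBall d ε x ∈ F)) :=
  stmt10_general d hUVA
end

section
/- Let X be a V-space with uniformly vanishing asymmetry, and let X̃ be the set of proper Cauchy filters on X with d(F,G) = ⋁_{F₀∈F, G₀∈G} ⋀_{f∈F₀, g∈G₀} d(f,g). Then (X̃, d) is a V-space, i.e., d(F,F) = 0 and d(F,H) ≤ d(F,G) + d(G,H). -/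
open Filter Set

variable {V : Type*} [ValueQuantale V] {X : Type*}

/-- Auxiliary lemmas -/
lemma add_le_add_left'' (a : V) {c e : V} (h : c ≤ e) : a + c ≤ a + e := by
  have h1 : a + (c ⊓ e) = (a + c) ⊓ (a + e) := by
    have h2 := ValueQuantale.add_sInf' a {c, e}
    rwa [sInf_pair, Set.image_pair, sInf_pair] at h2
  rw [inf_eq_left.mpr h] at h1
  rw [h1]; exact inf_le_right

lemma add_le_add'' {a b c e : V} (h1 : a ≤ b) (h2 : c ≤ e) : a + c ≤ b + e := by
  refine le_trans (add_le_add_left'' a h2) ?_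
  rw [ValueQuantale.add_comm' a e, ValueQuantale.add_comm' b e]
  exact add_le_add_left'' e h1

lemma add_iInf'' {ι : Sort*} (a : V) (f : ι → V) : a + ⨅ i, f i = ⨅ i, a + f i := by
  have h := ValueQuantale.add_sInf' a (Set.range f)
  rw [sInf_range] at h
  rw [h, ← Set.range_comp, sInf_range]
  rfl

lemma iInf_add'' {ι : Sort*} (f : ι → V) (a : V) : (⨅ i, f i) + a = ⨅ i, f i + a := by
  rw [ValueQuantale.add_comm', add_iInf'']
  exact iInf_congr fun i => ValueQuantale.add_comm' a (f i)

lemma le_of_forall_wa_add {a b : V} (h : ∀ ε : V, WellAbove ε ⊥ → a ≤ b + ε) : a ≤ b := by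
  have hbot : sInf {y : V | WellAbove y ⊥} = ⊥ := (ValueQuantale.sInf_wellAbove ⊥).symm
  have h2 : a ≤ b + sInf {y : V | WellAbove y ⊥} := by
    rw [ValueQuantale.add_sInf']
    apply le_sInf
    rintro _ ⟨ε, hε, rfl⟩
    exact h ε hε
  rwa [hbot, ValueQuantale.add_bot'] at h2

lemma wa_half {η : V} (h : WellAbove η ⊥) : ∃ ε : V, WellAbove ε ⊥ ∧ ε + ε ≤ η := by
  set W : Set V := {y : V | WellAbove y ⊥} with hWdef
  have hW : sInf W = ⊥ := (ValueQuantale.sInf_wellAbove ⊥).symm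
  set T : Set V := {z : V | ∃ δ ∈ W, ∃ δ' ∈ W, z = δ + δ'} with hTdef
  have hT : sInf T ≤ ⊥ := by
    have h1 : sInf W + sInf W = sInf ((sInf W + ·) '' W) := ValueQuantale.add_sInf' _ _
    have h2 : sInf T ≤ sInf W + sInf W := by
      rw [h1]
      apply le_sInf
      rintro _ ⟨δ', hδ', rfl⟩
      have h3 : sInf W + δ' = sInf ((δ' + ·) '' W) := by
        rw [ValueQuantale.add_comm']; exact ValueQuantale.add_sInf' _ _
      show sInf T ≤ sInf W + δ'
      rw [h3]
      apply le_sInf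
      rintro _ ⟨δ, hδ, rfl⟩
      exact sInf_le ⟨δ', hδ', δ, hδ, rfl⟩
    calc sInf T ≤ sInf W + sInf W := h2
      _ = ⊥ := by rw [hW, ValueQuantale.add_bot']
  obtain ⟨z, hz, hzη⟩ := h T hT
  obtain ⟨δ, hδ, δ', hδ', rfl⟩ := hz
  refine ⟨δ ⊓ δ', ValueQuantale.inf_wellAbove_bot δ δ' hδ hδ', ?_⟩
  exact le_trans (add_le_add'' inf_le_left inf_le_right) hzη

/-- The set of proper Cauchy filters with the filter distance is a `V`-space. -/
theorem stmt13 (d : X → X → V) (hrefl : ∀ x, d x x = ⊥)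
    (htri : ∀ x y z, d x z ≤ d x y + d y z) (hUVA : UVA d) :
    (∀ F : Filter X, F ≠ ⊥ → IsCauchyF d F → distF d F F = ⊥) ∧
    (∀ F G H : Filter X, F ≠ ⊥ → IsCauchyF d F → G ≠ ⊥ → IsCauchyF d G →
      H ≠ ⊥ → IsCauchyF d H → distF d F H ≤ distF d F G + distF d G H) := by
  constructor
  · intro F hF hFc
    haveI : F.NeBot := ⟨hF⟩
    refine le_bot_iff.mp ?_
    refine iSup₂_le fun F₀ hF₀ => iSup₂_le fun G₀ hG₀ => ?_
    obtain ⟨x, hx1, hx2⟩ := Filter.nonempty_of_mem (Filter.inter_mem hF₀ hG₀)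
    calc distSet d F₀ G₀ ≤ ⨅ t ∈ G₀, d x t := iInf₂_le x hx1
      _ ≤ d x x := iInf₂_le x hx2
      _ = ⊥ := hrefl x
  · intro F G H hF hFc hG hGc hH hHc
    refine le_of_forall_wa_add fun η hη => ?_
    obtain ⟨ε, hε, hεη⟩ := wa_half hη
    obtain ⟨ε', hε', hUV⟩ := hUVA ε hε
    set δ : V := ε' ⊓ ε with hδdef
    have hδwa : WellAbove δ ⊥ := ValueQuantale.inf_wellAbove_bot ε' ε hε' hε
    obtain ⟨g, hg⟩ := hGc δ hδwa
    set G₀ : Set X := ball' d δ g with hG₀def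
    refine iSup₂_le fun F₀ hF₀ => iSup₂_le fun H₀ hH₀ => ?_
    have e : distSet d F₀ G₀ + (distSet d G₀ H₀ + (ε + ε))
        = ⨅ s, ⨅ _ : s ∈ F₀, ⨅ g', ⨅ _ : g' ∈ G₀, ⨅ g'', ⨅ _ : g'' ∈ G₀, ⨅ t, ⨅ _ : t ∈ H₀,
            (d s g' + (d g'' t + (ε + ε))) := by
      have e1 : distSet d G₀ H₀ + (ε + ε)
          = ⨅ g'', ⨅ _ : g'' ∈ G₀, ⨅ t, ⨅ _ : t ∈ H₀, (d g'' t + (ε + ε)) := by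
        unfold distSet
        rw [iInf_add'']
        refine iInf_congr fun g'' => ?_
        rw [iInf_add'']
        refine iInf_congr fun _ => ?_
        rw [iInf_add'']
        refine iInf_congr fun t => ?_
        rw [iInf_add'']
      rw [e1]
      unfold distSet
      rw [iInf_add'']
      refine iInf_congr fun s => ?_
      rw [iInf_add'']
      refine iInf_congr fun _ => ?_
      rw [iInf_add'']
      refine iInf_congr fun g' => ?_
      rw [iInf_add'']
      refine iInf_congr fun _ => ?_
      rw [add_iInf'']
      refine iInf_congr fun g'' => ?_
      rw [add_iInf'']
      refine iInf_congr fun _ => ?_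
      rw [add_iInf'']
      refine iInf_congr fun t => ?_
      rw [add_iInf'']
    have key : distSet d F₀ H₀ ≤ distSet d F₀ G₀ + (distSet d G₀ H₀ + (ε + ε)) := by
      rw [e]
      refine le_iInf fun s => le_iInf fun hs => le_iInf fun g' => le_iInf fun hg' =>
        le_iInf fun g'' => le_iInf fun hg'' => le_iInf fun t => le_iInf fun ht => ?_
      have hgg' : d g g' ≤ δ := hg'
      have hgg'' : d g g'' ≤ δ := hg''
      have hg'g : d g' g ≤ ε := hUV g' g (le_trans hgg' inf_le_left)
      have hmid : d g' g'' ≤ ε + ε :=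
        le_trans (htri g' g g'') (add_le_add'' hg'g (le_trans hgg'' inf_le_right))
      calc distSet d F₀ H₀ ≤ ⨅ u ∈ H₀, d s u := iInf₂_le s hs
        _ ≤ d s t := iInf₂_le t ht
        _ ≤ d s g' + d g' t := htri s g' t
        _ ≤ d s g' + (d g' g'' + d g'' t) := add_le_add_left'' _ (htri g' g'' t)
        _ ≤ d s g' + ((ε + ε) + d g'' t) :=
            add_le_add_left'' _ (add_le_add'' hmid le_rfl)
        _ = d s g' + (d g'' t + (ε + ε)) := by
            rw [ValueQuantale.add_comm' (ε + ε) (d g'' t)]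
    have h1 : distSet d F₀ G₀ ≤ distF d F G :=
      le_iSup₂_of_le F₀ hF₀ (le_iSup₂_of_le G₀ hg le_rfl)
    have h2 : distSet d G₀ H₀ ≤ distF d G H :=
      le_iSup₂_of_le G₀ hg (le_iSup₂_of_le H₀ hH₀ le_rfl)
    calc distSet d F₀ H₀ ≤ distSet d F₀ G₀ + (distSet d G₀ H₀ + (ε + ε)) := key
      _ ≤ distF d F G + (distF d G H + η) :=
          add_le_add'' h1 (add_le_add'' h2 hεη)
      _ = distF d F G + distF d G H + η := (ValueQuantale.add_assoc' _ _ _).symm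
end

section
/- Let X be a V-space with uniformly vanishing asymmetry. The canonical embedding ι : X → X̂ given by ι(x) = F_x (the filter generated by the balls B_ε(x), ε ≻ 0) is an isometry: d(ι(x), ι(y)) = d(x,y) for all x, y ∈ X. -/
open Filter Set

variable {V : Type*} [ValueQuantale V] {X : Type*}

section Aux
variable {V : Type*} [ValueQuantale V]

lemma vq_add_comm (a b : V) : a + b = b + a := ValueQuantale.add_comm' a b
lemma vq_add_assoc (a b c : V) : a + b + c = a + (b + c) := ValueQuantale.add_assoc' a b c
lemma vq_add_bot (a : V) : a + ⊥ = a := ValueQuantale.add_bot' a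
lemma vq_add_sInf (a : V) (S : Set V) : a + sInf S = sInf ((a + ·) '' S) :=
  ValueQuantale.add_sInf' a S

lemma vq_add_le_add_left {b c : V} (h : b ≤ c) (a : V) : a + b ≤ a + c := by
  have h1 : a + sInf {b, c} = sInf ((a + ·) '' {b, c}) := vq_add_sInf a _
  have h2 : sInf ({b, c} : Set V) = b := by rw [sInf_pair, inf_eq_left.2 h]
  have h3 : ((a + ·) '' {b, c}) = {a + b, a + c} := Set.image_pair _ _ _
  rw [h2, h3, sInf_pair] at h1
  rw [h1]; exact inf_le_right

lemma vq_add_iInf {ι : Sort*} (a : V) (f : ι → V) : a + ⨅ i, f i = ⨅ i, (a + f i) := by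
  rw [iInf, vq_add_sInf, ← Set.range_comp, iInf]; rfl

lemma vq_add_biInf {ι : Type*} (a : V) (s : Set ι) (f : ι → V) :
    a + ⨅ i ∈ s, f i = ⨅ i ∈ s, (a + f i) := by
  rw [vq_add_iInf]; exact iInf_congr fun i => vq_add_iInf a _

lemma vq_iInf2 : (⨅ a ∈ {y : V | WellAbove y ⊥}, ⨅ b ∈ {y : V | WellAbove y ⊥}, a + b) = ⊥ := by
  have hA : sInf {y : V | WellAbove y ⊥} = (⊥ : V) := (ValueQuantale.sInf_wellAbove (⊥ : V)).symm
  have h1 : ∀ a : V, (⨅ b ∈ {y : V | WellAbove y ⊥}, a + b) = a := by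
    intro a
    have := vq_add_biInf a {y : V | WellAbove y ⊥} id
    simp only [id] at this
    rw [← this, ← sInf_eq_iInf, hA, vq_add_bot]
  simp only [h1]
  rw [← sInf_eq_iInf, hA]

end Aux

/-- The canonical embedding `x ↦ F_x` into the space of minimal Cauchy filters
is an isometry. -/
theorem stmt17 (d : X → X → V) (hrefl : ∀ x, d x x = ⊥)
    (htri : ∀ x y z, d x z ≤ d x y + d y z) (hUVA : UVA d) (x y : X) :
    distF d (ptFilter d x) (ptFilter d y) = d x y := by
  apply le_antisymm
  · -- distF ≤ d x y
    have hmem : ∀ (z : X) (F₀ : Set X), F₀ ∈ ptFilter d z → z ∈ F₀ := by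
      intro z F₀ h
      have h' : Filter.GenerateSets {S | ∃ ε : V, WellAbove ε ⊥ ∧ S = ball' d ε z} F₀ := h
      clear h
      induction h' with
      | basic h =>
        obtain ⟨ε, hε, rfl⟩ := h
        show d z z ≤ ε
        rw [hrefl]; exact bot_le
      | univ => trivial
      | superset _ hsub ih => exact hsub ih
      | inter _ _ ih1 ih2 => exact ⟨ih1, ih2⟩
    refine iSup₂_le fun F₀ hF₀ => iSup₂_le fun G₀ hG₀ => ?_
    exact le_trans (iInf₂_le x (hmem x F₀ hF₀)) (iInf₂_le y (hmem y G₀ hG₀))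
  · -- d x y ≤ distF
    set D := distF d (ptFilter d x) (ptFilter d y) with hD
    have key : ∀ ε ∈ {y : V | WellAbove y ⊥}, ∀ η ∈ {y : V | WellAbove y ⊥},
        d x y ≤ D + (ε + η) := by
      intro ε hε η hη
      obtain ⟨δ, hδ, hδ'⟩ := hUVA η hη
      have hball : ball' d ε x ∈ ptFilter d x :=
        Filter.GenerateSets.basic ⟨ε, hε, rfl⟩
      have hball' : ball' d δ y ∈ ptFilter d y :=
        Filter.GenerateSets.basic ⟨δ, hδ, rfl⟩
      have h1 : d x y ≤ (ε + η) + distSet d (ball' d ε x) (ball' d δ y) := by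
      -- push addition inside the two infima
        rw [distSet, vq_add_biInf]
        refine le_iInf₂ fun f hf => ?_
        rw [vq_add_biInf]
        refine le_iInf₂ fun g hg => ?_
        have hxf : d x f ≤ ε := hf
        have hgy : d g y ≤ η := hδ' g y hg
        calc d x y ≤ d x f + d f y := htri x f y
          _ ≤ d x f + (d f g + d g y) := vq_add_le_add_left (htri f g y) _
          _ ≤ ε + (d f g + η) := by
              refine le_trans (vq_add_le_add_left (vq_add_le_add_left hgy _) _) ?_
              rw [vq_add_comm (d x f), vq_add_comm ε]
              exact vq_add_le_add_left hxf _
          _ = ε + η + d f g := by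
              rw [vq_add_comm (d f g) η, ← vq_add_assoc]
      have h2 : distSet d (ball' d ε x) (ball' d δ y) ≤ D := by
        rw [hD, distF]
        exact le_iSup₂_of_le (ball' d ε x) hball (le_iSup₂_of_le (ball' d δ y) hball' le_rfl)
      calc d x y ≤ (ε + η) + distSet d (ball' d ε x) (ball' d δ y) := h1
        _ ≤ (ε + η) + D := vq_add_le_add_left h2 _
        _ = D + (ε + η) := vq_add_comm _ _
    have h3 : d x y ≤ ⨅ ε ∈ {y : V | WellAbove y ⊥}, ⨅ η ∈ {y : V | WellAbove y ⊥}, D + (ε + η) :=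
      le_iInf₂ fun ε hε => le_iInf₂ fun η hη => key ε hε η hη
    have h4 : (⨅ ε ∈ {y : V | WellAbove y ⊥}, ⨅ η ∈ {y : V | WellAbove y ⊥}, D + (ε + η)) = D := by
      have : ∀ ε : V, (⨅ η ∈ {y : V | WellAbove y ⊥}, D + (ε + η)) = D + ⨅ η ∈ {y : V | WellAbove y ⊥}, ε + η := by
        intro ε; rw [vq_add_biInf]
      simp only [this]
      rw [← vq_add_biInf, vq_iInf2, vq_add_bot]
    rw [h4] at h3
    exact h3
end

section
/- Let X be a V-space with uniformly vanishing asymmetry. Then the image ι(X) of the canonical embedding is dense in X̂: for every minimal Cauchy filter G ∈ X̂ and every ε ≻ 0 there exists x ∈ X with d(G, F_x) ≤ ε. -/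
open Filter Set

variable {V : Type*} [ValueQuantale V] {X : Type*}

/-- The image of the canonical embedding is dense in `X̂`. -/
theorem stmt18 (d : X → X → V) (hrefl : ∀ x, d x x = ⊥)
    (htri : ∀ x y z, d x z ≤ d x y + d y z) (hUVA : UVA d)
    (G : Filter X) (hG : G ≠ ⊥) (hmin : IsMinCauchy d G)
    (ε : V) (hε : WellAbove ε ⊥) :
    ∃ x : X, distF d G (ptFilter d x) ≤ ε := by
  haveI : G.NeBot := ⟨hG⟩
  obtain ⟨δ, hδ, hδε⟩ := hUVA ε hε
  obtain ⟨x, hx⟩ := hmin.1 δ hδ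
  refine ⟨x, ?_⟩
  have hxmem : ∀ H₀ ∈ ptFilter d x, x ∈ H₀ := by
    intro H₀ hH₀
    induction hH₀ with
    | basic h => obtain ⟨ε', _, rfl⟩ := h; simp [ball', hrefl]
    | univ => trivial
    | superset _ hsub ih => exact hsub ih
    | inter _ _ ih1 ih2 => exact ⟨ih1, ih2⟩
  rw [distF]
  refine iSup₂_le fun G₀ hG₀ => iSup₂_le fun H₀ hH₀ => ?_
  obtain ⟨s, hs₁, hs₂⟩ := Filter.nonempty_of_mem (G.inter_mem hG₀ hx)
  calc distSet d G₀ H₀ ≤ d s x := by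
        refine le_trans (biInf_le _ hs₁) (biInf_le _ (hxmem H₀ hH₀))
    _ ≤ ε := hδε s x hs₂
end

section
/- Let X be a V-space with uniformly vanishing asymmetry. Then X̂, the V-space of minimal Cauchy filters on X, is Cauchy complete: every proper Cauchy filter on X̂ converges. -/
open Filter Set

variable {V : Type*} [ValueQuantale V] {X : Type*}

/-!
For every `δ ≻ 0` pick a point `F_δ` of `X̂` whose `δ`-ball lies in `A`, and a centre `x_δ` with
`B_δ(x_δ) ∈ F_δ`. Comparing `x_δ` and `x_δ'` through the centre of a common member `G` of the two
balls in `A` bounds `d(x_δ, x_δ')` by quantities that vanish as `δ, δ' → 0`, because the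
asymmetry of `d` vanishes uniformly. So `(x_δ)` is a Cauchy net, its tail filter `C` is Cauchy,
and its roundification `C_≻` is minimal Cauchy. For small `δ` every `G` in the `δ`-ball of `F_δ`
satisfies `d(C_≻, G) ≤ d(C, G) ≤ ε`, hence `A` converges to `C_≻`.
-/

namespace ValueQuantale

instance : Zero V := ⟨⊥⟩

instance : AddCommMonoid V where
  add_assoc := add_assoc'
  zero_add a := (add_comm' ⊥ a).trans (add_bot' a)
  add_zero := add_bot'
  add_comm := add_comm'
  nsmul := nsmulRec

theorem add_iInf {ι : Sort*} (a : V) (f : ι → V) : a + ⨅ i, f i = ⨅ i, a + f i := by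
  rw [iInf, add_sInf', ← Set.range_comp, iInf]
  rfl

theorem iInf_add {ι : Sort*} (a : V) (f : ι → V) : (⨅ i, f i) + a = ⨅ i, f i + a := by
  simp only [add_comm _ a, add_iInf]

instance : IsOrderedAddMonoid V where
  add_le_add_left a b hab c := by
    have h := iInf_add c fun i : Bool => cond i a b
    simp only [iInf_bool_eq, cond_true, cond_false, inf_eq_left.2 hab] at h
    exact h ▸ inf_le_right

theorem sInf_wellAbove_bot : sInf {ε : V | WellAbove ε ⊥} = ⊥ := (sInf_wellAbove ⊥).symm

theorem exists_add_le {ε : V} (hε : WellAbove ε ⊥) : ∃ δ, WellAbove δ ⊥ ∧ δ + δ ≤ ε := by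
  have h : sInf (Set.image2 (· + ·) {p : V | WellAbove p ⊥} {q | WellAbove q ⊥}) ≤ ⊥ := by
    simp only [sInf_image2, ← add_iInf, ← sInf_eq_iInf, sInf_wellAbove_bot, add_bot', le_refl]
  obtain ⟨_, ⟨p, hp, q, hq, rfl⟩, hpq⟩ := hε _ h
  exact ⟨p ⊓ q, inf_wellAbove_bot p q hp hq, (add_le_add inf_le_left inf_le_right).trans hpq⟩

/-- `atBot` on `Pos V` encodes the limit `ε → 0` along `ε ≻ 0`. -/
abbrev Pos (V : Type*) [ValueQuantale V] := {ε : V // WellAbove ε ⊥}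

instance : IsCodirectedOrder (Pos V) :=
  ⟨fun a b => ⟨⟨a ⊓ b, inf_wellAbove_bot _ _ a.2 b.2⟩, inf_le_left, inf_le_right⟩⟩

def nhdsBot (V : Type*) [ValueQuantale V] : Filter V :=
  ⨅ ε ∈ {ε : V | WellAbove ε ⊥}, 𝓟 (Iic ε)

variable {ι : Type*} {l : Filter ι} {u v : ι → V}

theorem tendsto_nhdsBot :
    Tendsto u l (nhdsBot V) ↔ ∀ ε, WellAbove ε ⊥ → ∀ᶠ i in l, u i ≤ ε := by
  simp [nhdsBot, tendsto_iInf, tendsto_principal]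

theorem tendsto_nhdsBot_add (hu : Tendsto u l (nhdsBot V)) (hv : Tendsto v l (nhdsBot V)) :
    Tendsto (fun i => u i + v i) l (nhdsBot V) := by
  refine tendsto_nhdsBot.2 fun ε hε => ?_
  obtain ⟨δ, hδ, hδε⟩ := exists_add_le hε
  filter_upwards [tendsto_nhdsBot.1 hu δ hδ, tendsto_nhdsBot.1 hv δ hδ] with i hui hvi
  exact (add_le_add hui hvi).trans hδε

theorem tendsto_nhdsBot_of_le (hv : Tendsto v l (nhdsBot V)) (huv : ∀ i, u i ≤ v i) :
    Tendsto u l (nhdsBot V) :=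
  tendsto_nhdsBot.2 fun ε hε => (tendsto_nhdsBot.1 hv ε hε).mono fun i hi => (huv i).trans hi

theorem tendsto_val_atBot : Tendsto (Subtype.val : Pos V → V) atBot (nhdsBot V) :=
  tendsto_nhdsBot.2 fun ε hε => eventually_le_atBot (⟨ε, hε⟩ : Pos V)

end ValueQuantale

open ValueQuantale

section VSpace

variable {d : X → X → V}

def asymmetry (d : X → X → V) (δ : V) : V := ⨆ (x) (y) (_ : d y x ≤ δ), d x y

theorem le_asymmetry (x y : X) : d x y ≤ asymmetry d (d y x) :=
  le_iSup₂_of_le x y (le_iSup_of_le le_rfl le_rfl)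

theorem asymmetry_mono : Monotone (asymmetry d) :=
  fun _ _ h => iSup₂_mono fun _ _ => iSup_mono' fun hyx => ⟨hyx.trans h, le_rfl⟩

theorem UVA.tendsto_asymmetry (h : UVA d) : Tendsto (asymmetry d) (nhdsBot V) (nhdsBot V) := by
  refine tendsto_nhdsBot.2 fun ε hε => ?_
  obtain ⟨δ, hδ, hflip⟩ := h ε hε
  filter_upwards [tendsto_nhdsBot.1 tendsto_id δ hδ] with η hη
  exact iSup₂_le fun x y => iSup_le fun hyx => hflip x y (hyx.trans hη)

theorem distSet_le {S T : Set X} {s t : X} (hs : s ∈ S) (ht : t ∈ T) : distSet d S T ≤ d s t :=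
  iInf₂_le_of_le s hs (iInf₂_le t ht)

theorem distSet_le_distF {F G : Filter X} {S T : Set X} (hS : S ∈ F) (hT : T ∈ G) :
    distSet d S T ≤ distF d F G :=
  le_iSup₂_of_le S hS (le_iSup₂_of_le T hT le_rfl)

theorem distF_le {F G : Filter X} {c : V} (h : ∀ S ∈ F, ∀ T ∈ G, distSet d S T ≤ c) :
    distF d F G ≤ c :=
  iSup₂_le fun S hS => iSup₂_le fun T hT => h S hS T hT

theorem distF_anti_left {F F' G : Filter X} (h : F ≤ F') : distF d F' G ≤ distF d F G :=
  distF_le fun _ hS _ hT => distSet_le_distF (h hS) hT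

theorem isCauchyF_map_of_tendsto {ι : Type*} {l : Filter ι} [l.NeBot]
    {x : ι → X} (h : Tendsto (fun p : ι × ι => d (x p.1) (x p.2)) (l ×ˢ l) (nhdsBot V)) :
    IsCauchyF d (map x l) := fun ε hε =>
  let ⟨i, hi⟩ := (tendsto_nhdsBot.1 h ε hε).curry.exists
  ⟨x i, hi⟩

variable (htri : ∀ x y z, d x z ≤ d x y + d y z)
include htri

theorem dist_le_add_distF_add {F G : Filter X} {x z : X} {γ η : V}
    (hx : ball' d γ x ∈ F) (hz : ball' d η z ∈ G) :
    d x z ≤ γ + (distF d F G + asymmetry d η) := by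
  suffices d x z ≤ γ + (distSet d (ball' d γ x) (ball' d η z) + asymmetry d η) by
    grw [this, distSet_le_distF hx hz]
  simp only [distSet, iInf_add, add_iInf]
  refine le_iInf₂ fun f (hf : d x f ≤ γ) => le_iInf₂ fun g (hg : d z g ≤ η) => ?_
  calc d x z ≤ d x f + (d f g + d g z) := by grw [htri x f z, htri f g z]
    _ ≤ γ + (d f g + asymmetry d η) := by
      grw [hf, le_asymmetry (d := d) g z, asymmetry_mono hg]

theorem dist_le_of_distF_le {F G : Filter X} {x z : X} {δ η : V}
    (hx : ball' d δ x ∈ F) (hz : ball' d η z ∈ G) (hFG : distF d F G ≤ δ) :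
    d x z ≤ δ + δ + asymmetry d η := by
  grw [add_assoc, dist_le_add_distF_add htri hx hz, hFG]

theorem distF_le_of_frequently {F G : Filter X} [G.NeBot] {z : X} {η c : V}
    (hz : ball' d η z ∈ G) (h : ∃ᶠ y in F, d y z + η ≤ c) : distF d F G ≤ c := by
  refine distF_le fun S hS T hT => ?_
  obtain ⟨y, hyc, hyS⟩ := (h.and_eventually hS).exists
  obtain ⟨g, hgT, hg : d z g ≤ η⟩ := Filter.nonempty_of_mem (inter_mem hT hz)
  calc distSet d S T ≤ d y g := distSet_le hyS hgT
    _ ≤ d y z + η := by grw [htri y z g, hg]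
    _ ≤ c := hyc

end VSpace

section Roundify

variable {d : X → X → V} {C G : Filter X}

theorem le_roundify (hrefl : ∀ x, d x x = ⊥) (C : Filter X) : C ≤ roundify d C := by
  refine Filter.le_generate_iff.2 ?_
  rintro _ ⟨F₀, hF₀, ε, -, rfl⟩
  exact mem_of_superset hF₀ fun f hf =>
    mem_biUnion hf (show d f f ≤ ε from (hrefl f).trans_le bot_le)

variable (htri : ∀ x y z, d x z ≤ d x y + d y z)
include htri

theorem isCauchyF_roundify (hC : IsCauchyF d C) : IsCauchyF d (roundify d C) := by
  intro ε hε
  obtain ⟨δ, hδ, hδδ⟩ := exists_add_le hε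
  obtain ⟨x, hx⟩ := hC δ hδ
  refine ⟨x, mem_of_superset (GenerateSets.basic ⟨_, hx, δ, hδ, rfl⟩) fun y hy => ?_⟩
  obtain ⟨f, hf : d x f ≤ δ, hfy : d f y ≤ δ⟩ := mem_iUnion₂.1 hy
  exact (htri x f y).trans ((add_le_add hf hfy).trans hδδ)

theorem le_roundify_of_le (hUVA : UVA d) [C.NeBot] (hG : IsCauchyF d G) (hCG : C ≤ G) :
    G ≤ roundify d C := by
  refine Filter.le_generate_iff.2 ?_
  rintro _ ⟨F₀, hF₀, ε, hε, rfl⟩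
  obtain ⟨a, ha, haε⟩ := exists_add_le hε
  obtain ⟨u, hu, hflip⟩ := hUVA a ha
  obtain ⟨x, hx⟩ := hG (u ⊓ a) (inf_wellAbove_bot u a hu ha)
  obtain ⟨f, hfx : d x f ≤ u ⊓ a, hfF₀⟩ := Filter.nonempty_of_mem (inter_mem (hCG hx) hF₀)
  refine mem_of_superset hx fun y (hy : d x y ≤ u ⊓ a) => mem_biUnion hfF₀ ?_
  calc d f y ≤ d f x + d x y := htri f x y
    _ ≤ a + a := add_le_add (hflip f x (hfx.trans inf_le_left)) (hy.trans inf_le_right)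
    _ ≤ ε := haε

theorem isMinCauchy_roundify (hrefl : ∀ x, d x x = ⊥) (hUVA : UVA d) [C.NeBot]
    (hC : IsCauchyF d C) : IsMinCauchy d (roundify d C) :=
  ⟨isCauchyF_roundify htri hC, fun _ hG hGsub =>
    le_antisymm (le_roundify_of_le htri hUVA hG ((le_roundify hrefl C).trans fun _ hs => hGsub hs))
      fun _ hs => hGsub hs⟩

end Roundify

/-- The space `X̂`. -/
abbrev Completion (d : X → X → V) := {F : Filter X // F ≠ ⊥ ∧ IsMinCauchy d F}

section Completeness

variable {d : X → X → V} (htri : ∀ x y z, d x z ≤ d x y + d y z) (hUVA : UVA d)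
  {A : Filter (Completion d)} [A.NeBot] {F : Pos V → Completion d} {x : Pos V → X}
  (hF : ∀ δ : Pos V, ball' (fun F G => distF d F.1 G.1) δ (F δ) ∈ A)
  (hx : ∀ δ : Pos V, ball' d δ (x δ) ∈ (F δ).1)
include htri hUVA hF hx

theorem tendsto_dist_centres :
    Tendsto (fun p : Pos V × Pos V => d (x p.1) (x p.2)) (atBot ×ˢ atBot) (nhdsBot V) := by
  have hasym := hUVA.tendsto_asymmetry
  have h₁ : Tendsto (fun p : Pos V × Pos V => (p.1 : V)) (atBot ×ˢ atBot) (nhdsBot V) :=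
    tendsto_val_atBot.comp tendsto_fst
  have h₂ : Tendsto (fun p : Pos V × Pos V => (p.2 : V)) (atBot ×ˢ atBot) (nhdsBot V) :=
    tendsto_val_atBot.comp tendsto_snd
  have e₁ := tendsto_nhdsBot_add (tendsto_nhdsBot_add h₁ h₁) (hasym.comp h₂)
  have e₂ := tendsto_nhdsBot_add (tendsto_nhdsBot_add h₂ h₂) (hasym.comp h₂)
  refine tendsto_nhdsBot_of_le (tendsto_nhdsBot_add e₁ (hasym.comp e₂)) fun ⟨δ, δ'⟩ => ?_
  obtain ⟨G, hG, hG'⟩ := Filter.nonempty_of_mem (inter_mem (hF δ) (hF δ'))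
  obtain ⟨z, hz⟩ := G.2.2.1 δ' δ'.2
  calc d (x δ) (x δ') ≤ d (x δ) z + asymmetry d (d (x δ') z) :=
        (htri _ z _).trans (add_le_add le_rfl (le_asymmetry _ _))
    _ ≤ _ := add_le_add (dist_le_of_distF_le htri (hx δ) hz hG)
        (asymmetry_mono (dist_le_of_distF_le htri (hx δ') hz hG'))

theorem eventually_distF_map_centres_le [Nonempty (Pos V)] {ε : V} (hε : WellAbove ε ⊥) :
    ∀ᶠ δ : Pos V in atBot, ∀ G ∈ ball' (fun F G => distF d F.1 G.1) δ (F δ),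
      distF d (map x atBot) G.1 ≤ ε := by
  obtain ⟨a, ha, haε⟩ := exists_add_le hε
  have hnet : ∀ᶠ δ in atBot, ∀ᶠ δ' in atBot, d (x δ') (x δ) ≤ a :=
    (eventually_swap_iff.1 (tendsto_nhdsBot.1 (tendsto_dist_centres htri hUVA hF hx) a ha)).curry
  have hsmall : ∀ᶠ δ : Pos V in atBot, δ + δ + asymmetry d δ + δ ≤ a := by
    have h := tendsto_val_atBot (V := V)
    exact tendsto_nhdsBot.1 (tendsto_nhdsBot_add (tendsto_nhdsBot_add (tendsto_nhdsBot_add h h)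
      (hUVA.tendsto_asymmetry.comp h)) h) a ha
  filter_upwards [hnet, hsmall] with δ hδnet hδ G hG
  have : G.1.NeBot := ⟨G.2.1⟩
  obtain ⟨z, hz⟩ := G.2.2.1 δ δ.2
  have hfreq : ∃ᶠ y in map x atBot, d y (x δ) ≤ a := tendsto_map.frequently hδnet.frequently
  refine distF_le_of_frequently htri hz (hfreq.mono fun y hy => ?_)
  calc d y z + δ ≤ d y (x δ) + d (x δ) z + δ := by grw [htri y (x δ) z]
    _ ≤ a + (δ + δ + asymmetry d δ + δ) := by
      grw [hy, dist_le_of_distF_le htri (hx δ) hz hG, add_assoc]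
    _ ≤ ε := (add_le_add le_rfl hδ).trans haε

end Completeness

/-- `X̂`, the space of (proper) minimal Cauchy filters with the filter distance,
is Cauchy complete: every proper Cauchy filter on `X̂` converges. -/
theorem stmt19 (d : X → X → V) (hrefl : ∀ x, d x x = ⊥)
    (htri : ∀ x y z, d x z ≤ d x y + d y z) (hUVA : UVA d) :
    ∀ A : Filter {F : Filter X // F ≠ ⊥ ∧ IsMinCauchy d F}, A ≠ ⊥ →
      IsCauchyF (fun F G => distF d F.1 G.1) A →
      ∃ L : {F : Filter X // F ≠ ⊥ ∧ IsMinCauchy d F},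
        ∀ ε : V, WellAbove ε ⊥ → ball' (fun F G => distF d F.1 G.1) ε L ∈ A := by
  intro A hA hAc
  have : A.NeBot := ⟨hA⟩
  obtain ⟨L₀⟩ := nonempty_of_neBot A
  cases isEmpty_or_nonempty (Pos V)
  · exact ⟨L₀, fun ε hε => isEmptyElim (⟨ε, hε⟩ : Pos V)⟩
  choose F hF using fun δ : Pos V => hAc δ δ.2
  choose x hx using fun δ : Pos V => (F δ).2.2.1 δ δ.2
  have hC : IsCauchyF d (map x atBot) :=
    isCauchyF_map_of_tendsto (tendsto_dist_centres htri hUVA hF hx)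
  have hCL := le_roundify hrefl (map x atBot)
  refine ⟨⟨roundify d (map x atBot), (NeBot.mono inferInstance hCL).ne,
    isMinCauchy_roundify htri hrefl hUVA hC⟩, fun ε hε => ?_⟩
  obtain ⟨δ, hδ⟩ := (eventually_distF_map_centres_le htri hUVA hF hx hε).exists
  exact mem_of_superset (hF δ) fun G hG => (distF_anti_left hCL).trans (hδ G hG)
end
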